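/- Let k ≥ 2, define F : ℂ³ → ℂ by F(x,y,z) = conj(x)·y·(x + z^k), and let y₀ ∈ ℝ with y₀ ≠ 0. Then there exist a sequence of points pₙ → (0, y₀, 0) with F(pₙ) ≠ 0 and fderiv ℝ F pₙ surjective, and unit vectors wₙ ∈ ℂ³ orthogonal (with respect to the real inner product) to ker(fderiv ℝ F pₙ), such that wₙ → (0, i, 0). Since (0, i, 0) is a real tangent vector to the singular line {x = z = 0} of F at (0, y₀, 0), the corresponding limit of tangent spaces to the fibres of F does not contain the tangent space of the y-axis; consequently F is not Thom regular along the y-axis. (Computation of Section 5.1 showing that F has a Milnor tube fibration but no Thom regularity; one may take pₙ = (xₙ, y₀, 0) with xₙ → 0, xₙ ≠ 0, and wₙ the normalization of the normal vector n_i(pₙ) = (0, i·|xₙ|², 0).) -/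

import Mathlib

/-!
Since `d(z^k)` vanishes at `z = 0` for `k ≥ 2`, at a point `(x, y₀, 0)` the real derivative of
`F` is `u ↦ y₀ (x̄ u₀ + x ū₀) + |x|² u₁`. For real `y₀` the first term is real, so the kernel of
`dF` lies in `{Im u₁ = 0}`, the real orthogonal complement of `(0, i, 0)`; and `dF (0, v, 0) = |x|² v`
shows that `dF` is onto as soon as `x ≠ 0`. Hence `x = 1 / (m + 1)` and the constant normal
`(0, i, 0)` will do.
-/

open Complex Filter Function Metric

noncomputable section

abbrev C3 := EuclideanSpace ℂ (Fin 3)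

def mk3 (a b c : ℂ) : C3 := WithLp.toLp 2 ![a, b, c]

def realInnerC (v w : C3) : ℝ := (∑ k : Fin 3, v k * (starRingEnd ℂ) (w k)).re

def xbarYXPlusZk (k : ℕ) (q : C3) : ℂ := starRingEnd ℂ (q 0) * (q 1 * (q 0 + q 2 ^ k))

@[simp] lemma mk3_apply_zero (a b c : ℂ) : mk3 a b c 0 = a := rfl
@[simp] lemma mk3_apply_one (a b c : ℂ) : mk3 a b c 1 = b := rfl
@[simp] lemma mk3_apply_two (a b c : ℂ) : mk3 a b c 2 = c := rfl

lemma continuous_mk3 (b c : ℂ) : Continuous fun a => mk3 a b c := by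
  unfold mk3
  fun_prop

lemma norm_mk3_zero_I_zero : ‖mk3 0 I 0‖ = 1 := by
  simp [EuclideanSpace.norm_eq, Fin.sum_univ_three]

lemma realInnerC_mk3_zero_I_zero (u : C3) : realInnerC (mk3 0 I 0) u = (u 1).im := by
  simp [realInnerC, Fin.sum_univ_three]

lemma hasFDerivAt_coord {ι : Type*} [Fintype ι] (i : ι) (p : EuclideanSpace ℂ ι) :
    HasFDerivAt (fun q : EuclideanSpace ℂ ι => q i)
      ((EuclideanSpace.proj i : EuclideanSpace ℂ ι →L[ℂ] ℂ).restrictScalars ℝ) p :=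
  ((EuclideanSpace.proj i : EuclideanSpace ℂ ι →L[ℂ] ℂ).restrictScalars ℝ).hasFDerivAt

lemma fderiv_xbarYXPlusZk_apply (k : ℕ) (p u : C3) :
    fderiv ℝ (xbarYXPlusZk k) p u =
      starRingEnd ℂ (u 0) * (p 1 * (p 0 + p 2 ^ k)) +
        starRingEnd ℂ (p 0) * (u 1 * (p 0 + p 2 ^ k) + p 1 * (u 0 + k * p 2 ^ (k - 1) * u 2)) := by
  have hconj := (conjCLE.toContinuousLinearMap.hasFDerivAt (x := p 0)).comp p (hasFDerivAt_coord 0 p)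
  have hpow := (((hasDerivAt_pow k (p 2)).hasFDerivAt).restrictScalars ℝ).comp p (hasFDerivAt_coord 2 p)
  have h : HasFDerivAt (xbarYXPlusZk k) _ p :=
    hconj.mul ((hasFDerivAt_coord 1 p).mul ((hasFDerivAt_coord 0 p).add hpow))
  rw [h.fderiv]
  simp only [ContinuousLinearEquiv.coe_coe, ContinuousAlgEquiv.coe_coeCLE, comp_apply,
    conjCAE_apply, smul_add, add_apply, smul_apply, ContinuousLinearMap.coe_restrictScalars',
    PiLp.proj_apply, smul_eq_mul, ContinuousLinearMap.comp_apply,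
    ContinuousLinearMap.toSpanSingleton_apply, ContinuousAlgEquiv.coeCLE_apply]
  ring

lemma xbarYXPlusZk_mk3_zero {k : ℕ} (hk : k ≠ 0) (a b : ℂ) :
    xbarYXPlusZk k (mk3 a b 0) = starRingEnd ℂ a * (b * a) := by
  simp [xbarYXPlusZk, hk]

lemma fderiv_xbarYXPlusZk_mk3_apply {k : ℕ} (hk : 2 ≤ k) (a b : ℂ) (u : C3) :
    fderiv ℝ (xbarYXPlusZk k) (mk3 a b 0) u =
      starRingEnd ℂ (u 0) * (b * a) + starRingEnd ℂ a * (u 1 * a + b * u 0) := by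
  simp [fderiv_xbarYXPlusZk_apply, show k ≠ 0 by omega, show k - 1 ≠ 0 by omega]

lemma surjective_fderiv_xbarYXPlusZk_mk3 {k : ℕ} (hk : 2 ≤ k) {a : ℂ} (ha : a ≠ 0) (b : ℂ) :
    Surjective (fderiv ℝ (xbarYXPlusZk k) (mk3 a b 0)) := by
  intro c
  refine ⟨mk3 0 (c / (starRingEnd ℂ a * a)) 0, ?_⟩
  have ha' : starRingEnd ℂ a ≠ 0 := (map_ne_zero _).2 ha
  simp only [fderiv_xbarYXPlusZk_mk3_apply hk, mk3_apply_zero, mk3_apply_one, map_zero]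
  field_simp
  ring

lemma im_fderiv_xbarYXPlusZk_mk3_apply {k : ℕ} (hk : 2 ≤ k) (a : ℂ) (b : ℝ) (u : C3) :
    (fderiv ℝ (xbarYXPlusZk k) (mk3 a b 0) u).im = normSq a * (u 1).im := by
  simp only [fderiv_xbarYXPlusZk_mk3_apply hk, add_im, mul_im, mul_re, conj_re, conj_im,
    ofReal_re, ofReal_im, add_re, normSq_apply]
  ring

/-- **Computation of Section 5.1** (failure of Thom regularity).  For `k ≥ 2` and
`F(x,y,z) = conj(x)·y·(x + z^k)`, at any point `(0, y₀, 0)`, `y₀ ∈ ℝ \ {0}`, of the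
singular line `{x = z = 0}` there is a sequence of regular points `pₘ → (0, y₀, 0)` with
`F(pₘ) ≠ 0`, together with unit normal vectors `wₘ` to the fibres of `F` at `pₘ`
(orthogonal, for the real inner product, to `ker (fderiv ℝ F pₘ)`), such that
`wₘ → (0, i, 0)` — a vector tangent to the `y`-axis, so that the limit of tangent spaces
to the fibres of `F` does not contain the tangent space of the `y`-axis and `F` is not
Thom regular along it. -/
theorem xbar_y_x_plus_zk_not_Thom_regular
    (k : ℕ) (hk : 2 ≤ k)
    (F : C3 → ℂ) (hF : ∀ q : C3, F q = starRingEnd ℂ (q 0) * (q 1 * (q 0 + (q 2) ^ k)))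
    (y₀ : ℝ) (hy₀ : y₀ ≠ 0) :
    ∃ ps ws : ℕ → C3,
      Tendsto ps atTop (nhds (mk3 0 (y₀ : ℂ) 0)) ∧
      (∀ m : ℕ, F (ps m) ≠ 0 ∧ Surjective ⇑(fderiv ℝ F (ps m))) ∧
      (∀ m : ℕ, ‖ws m‖ = 1 ∧ ∀ u : C3, fderiv ℝ F (ps m) u = 0 → realInnerC (ws m) u = 0) ∧
      Tendsto ws atTop (nhds (mk3 0 Complex.I 0)) := by
  obtain rfl : F = xbarYXPlusZk k := funext hF
  set x : ℕ → ℂ := fun m => 1 / ((m : ℂ) + 1)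
  have hx : ∀ m, x m ≠ 0 := fun m => one_div_ne_zero (Nat.cast_add_one_ne_zero m)
  refine ⟨fun m => mk3 (x m) y₀ 0, fun _ => mk3 0 I 0, ?_, fun m => ⟨?_, ?_⟩,
    fun m => ⟨norm_mk3_zero_I_zero, fun u hu => ?_⟩, tendsto_const_nhds⟩
  · exact (continuous_mk3 _ _).tendsto' 0 _ rfl |>.comp tendsto_one_div_add_atTop_nhds_zero_nat
  · rw [xbarYXPlusZk_mk3_zero (by omega)]
    exact mul_ne_zero ((map_ne_zero _).2 (hx m)) (mul_ne_zero (ofReal_ne_zero.2 hy₀) (hx m))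
  · exact surjective_fderiv_xbarYXPlusZk_mk3 hk (hx m) _
  · have him := congrArg im hu
    rw [im_fderiv_xbarYXPlusZk_mk3_apply hk, zero_im] at him
    rw [realInnerC_mk3_zero_I_zero]
    exact (mul_eq_zero.1 him).resolve_left (normSq_pos.2 (hx m)).ne'
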